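/- The subgroup R_n' of B_n generated by the flips r_1, …, r_n is a normal subgroup of B_n; equivalently, the normal closure of {r_1, …, r_n} in B_n equals the subgroup generated by {r_1, …, r_n}. -/

import Mathlib

/-!
Write `U = σ_1 ⋯ σ_{n-1}` and `D = σ_{n-1} ⋯ σ_1`. Conjugation by `U` (resp. `D⁻¹`) raises the
index of `σ_j` by one for `j < n - 1`, and `U ^ 2` (resp. `D ^ 2`) carries `σ_{n-1}` to `σ_1`
(resp. `σ_1` to `σ_{n-1}`), so `U ^ n` and `D ^ n` are central. Since `r_1 = U D` and
`r_{k+1} = U ^ k r_1 U ^ (-k)`, the product `r_n ⋯ r_1` telescopes to `U ^ n D ^ n`, hence is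
central. On the other hand `σ_j` commutes with `r_i` for `i ∉ {j, j + 1}` and conjugates `r_j`
to `r_{j+1}`; together with centrality this forces `σ_j` to commute with `r_{j+1} r_j`. Thus
`σ_j^{±1}` conjugates every flip into `R_n'`, i.e. every generator of `B_n` normalizes `R_n'`.
-/

namespace Braid

/-- Braid relations on generators indexed by `Fin m`; the generator `i : Fin m` stands for the
Artin generator `σ_{i+1}` of the braid group on `m+1` strands: the relations are
`σ_i σ_j = σ_j σ_i` for `|i-j| ≥ 2` and `σ_i σ_{i+1} σ_i = σ_{i+1} σ_i σ_{i+1}`. -/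
def braidRels (m : ℕ) : Set (FreeGroup (Fin m)) :=
  {r | ∃ i j : Fin m, i.val + 2 ≤ j.val ∧
      r = .of i * .of j * (.of j * .of i)⁻¹} ∪
  {r | ∃ (i : Fin m) (hij : i.val + 1 < m),
      r = .of i * .of ⟨i.val + 1, hij⟩ * .of i *
        (.of ⟨i.val + 1, hij⟩ * .of i * .of ⟨i.val + 1, hij⟩)⁻¹}

/-- The Artin braid group `B_n` on `n` strands, presented with generators `σ_1, …, σ_{n-1}`
and the braid relations. -/
def BraidGroup (n : ℕ) : Type := PresentedGroup (braidRels (n - 1))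

instance (n : ℕ) : Group (BraidGroup n) := by unfold BraidGroup; infer_instance

/-- The Artin generator `σ_i` of `B_n`, for `1 ≤ i ≤ n-1` (junk value `1` otherwise). -/
def σ (n : ℕ) (i : ℕ) : BraidGroup n :=
  if h : 1 ≤ i ∧ i ≤ n - 1 then PresentedGroup.of ⟨i - 1, by omega⟩ else 1

/-- The ascending product `σ_a σ_{a+1} ⋯ σ_b` (empty product if `b < a`). -/
def up (n a b : ℕ) : BraidGroup n := ((List.range' a (b + 1 - a)).map (σ n)).prod

/-- The descending product `σ_a σ_{a-1} ⋯ σ_b` (empty product if `a < b`). -/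
def down (n a b : ℕ) : BraidGroup n :=
  ((List.range' b (a + 1 - b)).reverse.map (σ n)).prod

/-- The full twist `d = (σ_{n-1} ⋯ σ_2 σ_1)^n` of `B_n`. -/
def fullTwist (n : ℕ) : BraidGroup n := (down n (n - 1) 1) ^ n

/-- The flip `r_i = σ_{i-1} ⋯ σ_2 σ_1^2 σ_2 ⋯ σ_{n-2} σ_{n-1}^2 σ_{n-2} ⋯ σ_i` of `B_n`
(for `1 ≤ i ≤ n`), written as `(σ_{i-1} ⋯ σ_1) (σ_1 ⋯ σ_{n-1}) (σ_{n-1} ⋯ σ_i)`. -/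
def flip (n i : ℕ) : BraidGroup n :=
  down n (i - 1) 1 * up n 1 (n - 1) * down n (n - 1) i

/-- The descending product of flips `r_a r_{a-1} ⋯ r_b` (empty product if `a < b`). -/
def flipsDown (n a b : ℕ) : BraidGroup n :=
  ((List.range' b (a + 1 - b)).reverse.map (flip n)).prod

/-- The subgroup `R_n ⊆ B_n` generated by the full twist `d` and the flips `r_1, …, r_n`. -/
def R (n : ℕ) : Subgroup (BraidGroup n) :=
  Subgroup.closure ({fullTwist n} ∪ flip n '' Set.Icc 1 n)

/-- The subgroup `R_n' ⊆ B_n` generated by the flips `r_1, …, r_n`. -/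
def R' (n : ℕ) : Subgroup (BraidGroup n) :=
  Subgroup.closure (flip n '' Set.Icc 1 n)

private lemma swap_braid {n : ℕ} (a b c : Fin n) (hab : a ≠ b) (hbc : b ≠ c) (hac : a ≠ c) :
    Equiv.swap a b * Equiv.swap b c * Equiv.swap a b
      = Equiv.swap b c * Equiv.swap a b * Equiv.swap b c := by
  have h1 : Equiv.swap b a * Equiv.swap c b * Equiv.swap b a = Equiv.swap a c :=
    Equiv.swap_mul_swap_mul_swap (Ne.symm hbc) hac.symm
  have h2 : Equiv.swap b c * Equiv.swap a b * Equiv.swap b c = Equiv.swap c a :=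
    Equiv.swap_mul_swap_mul_swap hab hac
  rw [h2, Equiv.swap_comm a b, Equiv.swap_comm b c, h1, Equiv.swap_comm a c]

private lemma swap_commute {n : ℕ} (a b c d : Fin n)
    (hac : a ≠ c) (had : a ≠ d) (hbc : b ≠ c) (hbd : b ≠ d) :
    Equiv.swap a b * Equiv.swap c d = Equiv.swap c d * Equiv.swap a b := by
  refine Equiv.Perm.Disjoint.commute ?_
  intro x
  by_cases h1 : x = a
  · subst h1; right; exact Equiv.swap_apply_of_ne_of_ne hac had
  · by_cases h2 : x = b
    · subst h2; right; exact Equiv.swap_apply_of_ne_of_ne hbc hbd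
    · left; exact Equiv.swap_apply_of_ne_of_ne h1 h2

/-- The transposition `(i, i+1)` of `Fin n` associated to the generator `i : Fin (n-1)`. -/
def permGen (n : ℕ) (i : Fin (n - 1)) : Equiv.Perm (Fin n) :=
  Equiv.swap ⟨i.val, by have := i.isLt; omega⟩ ⟨i.val + 1, by have := i.isLt; omega⟩

/-- The homomorphism `B_n → Sym(n)` sending `σ_i` to the transposition `(i, i+1)`. -/
def toPerm (n : ℕ) : BraidGroup n →* Equiv.Perm (Fin n) :=
  PresentedGroup.toGroup (f := permGen n)
    (by
      rintro r (⟨i, j, hij, rfl⟩ | ⟨i, hij, rfl⟩) <;>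
        simp only [map_mul, map_inv, FreeGroup.lift_apply_of, permGen] <;> rw [mul_inv_eq_one]
      · refine swap_commute _ _ _ _ ?_ ?_ ?_ ?_ <;>
          · rw [ne_eq, Fin.mk.injEq]; omega
      · refine swap_braid _ _ _ ?_ ?_ ?_ <;>
          · rw [ne_eq, Fin.mk.injEq]; omega)

/-- The pure braid group `P_n`: the kernel of `B_n → Sym(n)`, `σ_i ↦ (i, i+1)`. -/
def P (n : ℕ) : Subgroup (BraidGroup n) := (toPerm n).ker

private lemma mk_rel_eq_one {m : ℕ} {r : FreeGroup (Fin m)} (h : r ∈ braidRels m) :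
    PresentedGroup.mk (braidRels m) r = 1 :=
  (QuotientGroup.eq_one_iff _).mpr (Subgroup.subset_normalClosure h)

lemma σ_comm {n i j : ℕ} (h1 : 1 ≤ i) (h2 : i + 2 ≤ j) (h3 : j ≤ n - 1) :
    σ n i * σ n j = σ n j * σ n i := by
  have e : ∀ k (hk : 1 ≤ k ∧ k ≤ n - 1),
      σ n k = (PresentedGroup.of ⟨k - 1, by omega⟩ : BraidGroup n) := fun k hk => dif_pos hk
  rw [e i ⟨h1, by omega⟩, e j ⟨by omega, h3⟩]
  have hmem : (FreeGroup.of (⟨i - 1, by omega⟩ : Fin (n-1)) * .of ⟨j - 1, by omega⟩ *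
      (.of ⟨j - 1, by omega⟩ * .of ⟨i - 1, by omega⟩)⁻¹) ∈ braidRels (n - 1) :=
    Or.inl ⟨⟨i - 1, by omega⟩, ⟨j - 1, by omega⟩, by show i - 1 + 2 ≤ j - 1; omega, rfl⟩
  have h := mk_rel_eq_one hmem
  rw [map_mul, map_inv, mul_inv_eq_one, map_mul, map_mul] at h
  exact h

set_option maxHeartbeats 1600000 in
lemma σ_braid {n i : ℕ} (h1 : 1 ≤ i) (h2 : i + 1 ≤ n - 1) :
    σ n i * σ n (i + 1) * σ n i = σ n (i + 1) * σ n i * σ n (i + 1) := by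
  have e : ∀ k (hk : 1 ≤ k ∧ k ≤ n - 1),
      σ n k = (PresentedGroup.of ⟨k - 1, by omega⟩ : BraidGroup n) := fun k hk => dif_pos hk
  rw [e i ⟨h1, by omega⟩, e (i + 1) ⟨by omega, h2⟩]
  have key : (⟨i + 1 - 1, by omega⟩ : Fin (n - 1)) = ⟨(i - 1) + 1, by omega⟩ := by
    rw [Fin.mk.injEq]; omega
  rw [key]
  have hmem : (FreeGroup.of (⟨i - 1, by omega⟩ : Fin (n-1)) * .of ⟨(i-1) + 1, by omega⟩ *
      .of ⟨i - 1, by omega⟩ *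
      (.of ⟨(i-1) + 1, by omega⟩ * .of ⟨i - 1, by omega⟩ * .of ⟨(i-1)+1, by omega⟩)⁻¹)
      ∈ braidRels (n - 1) :=
    Or.inr ⟨⟨i - 1, by omega⟩, by show i - 1 + 1 < n - 1; omega, rfl⟩
  have h := mk_rel_eq_one hmem
  rw [map_mul, map_inv, mul_inv_eq_one, map_mul, map_mul, map_mul, map_mul] at h
  exact h

/-- The canonical homomorphism `ι : B_{n-1} → B_n` determined by `σ_i ↦ σ_i`. -/
def ι (n : ℕ) : BraidGroup (n - 1) →* BraidGroup n :=
  PresentedGroup.toGroup (f := fun i : Fin (n - 1 - 1) => σ n (i.val + 1))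
    (by
      rintro r (⟨i, j, hij, rfl⟩ | ⟨i, hij, rfl⟩) <;>
        simp only [map_mul, map_inv, FreeGroup.lift_apply_of] <;> rw [mul_inv_eq_one]
      · exact σ_comm (by omega) (by omega) (by have := j.isLt; omega)
      · exact σ_braid (by omega) (by have := i.isLt; omega))

theorem _root_.SemiconjBy.list_prod_map {M ι : Type*} [Monoid M] {x : M} {f g : ι → M}
    {l : List ι} (h : ∀ i ∈ l, SemiconjBy x (f i) (g i)) :
    SemiconjBy x (l.map f).prod (l.map g).prod := by
  induction l with
  | nil => exact SemiconjBy.one_right x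
  | cons i l ih =>
    simp only [List.map_cons, List.prod_cons]
    exact (h i List.mem_cons_self).mul_right (ih fun k hk => h k (List.mem_cons_of_mem i hk))

theorem _root_.SemiconjBy.pow_of_shift {M : Type*} [Monoid M] {s : ℕ → M} {x : M} {a b : ℕ}
    (h : ∀ j, a ≤ j → j < b → SemiconjBy x (s (j + 1)) (s j)) (m : ℕ) {j : ℕ}
    (haj : a ≤ j) (hjb : j + m ≤ b) : SemiconjBy (x ^ m) (s (j + m)) (s j) := by
  induction m with
  | zero => rw [pow_zero, add_zero]; exact SemiconjBy.one_left _
  | succ m ih =>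
    rw [pow_succ, ← add_assoc]
    exact (ih (by omega)).mul_left (h (j + m) (by omega) (by omega))

/-- Going `j → 1 → n - 1 → j` takes `(j - 1) + 2 + (n - 1 - j) = n` steps. -/
theorem commute_pow_of_cyclic_shift {M : Type*} [Monoid M] {s : ℕ → M} {x : M} {n : ℕ}
    (hshift : ∀ j, 1 ≤ j → j < n - 1 → SemiconjBy x (s (j + 1)) (s j))
    (hwrap : SemiconjBy (x ^ 2) (s 1) (s (n - 1))) {j : ℕ} (hj1 : 1 ≤ j) (hj2 : j ≤ n - 1) :
    Commute (x ^ n) (s j) := by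
  have hdown : SemiconjBy (x ^ (j - 1)) (s j) (s 1) := by
    simpa [show 1 + (j - 1) = j by omega] using SemiconjBy.pow_of_shift hshift (j - 1) le_rfl
      (by omega)
  have hup : SemiconjBy (x ^ (n - 1 - j)) (s (n - 1)) (s j) := by
    simpa [show j + (n - 1 - j) = n - 1 by omega] using SemiconjBy.pow_of_shift hshift
      (n - 1 - j) hj1 (by omega)
  have h := (hup.mul_left hwrap).mul_left hdown
  rwa [← pow_add, ← pow_add, show n - 1 - j + 2 + (j - 1) = n by omega] at h

theorem _root_.Subgroup.mem_normalizer_closure_of_conj {G : Type*} [Group G] {s : Set G} {g : G}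
    (hconj : ∀ x ∈ s, g * x * g⁻¹ ∈ Subgroup.closure s)
    (hconj_inv : ∀ x ∈ s, g⁻¹ * x * g ∈ Subgroup.closure s) :
    g ∈ Subgroup.normalizer (Subgroup.closure s : Set G) := by
  have hclosure : ∀ g : G, (∀ x ∈ s, g * x * g⁻¹ ∈ Subgroup.closure s) →
      ∀ h ∈ Subgroup.closure s, g * h * g⁻¹ ∈ Subgroup.closure s := fun g hg h hh =>
    (Subgroup.closure_le ((Subgroup.closure s).comap (MulAut.conj g).toMonoidHom)).2 hg hh
  refine Subgroup.mem_normalizer_iff.2 fun h => ⟨hclosure g hconj h, fun hh => ?_⟩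
  simpa [mul_assoc] using hclosure g⁻¹ (by simpa using hconj_inv) _ hh

section BraidRelations

variable {n : ℕ}

lemma σ_eq_one {i : ℕ} (h : ¬(1 ≤ i ∧ i ≤ n - 1)) : σ n i = 1 := dif_neg h

lemma σ_commute {i j : ℕ} (h : i + 2 ≤ j ∨ j + 2 ≤ i) : Commute (σ n i) (σ n j) := by
  wlog hij : i + 2 ≤ j generalizing i j
  · exact (this h.symm (h.resolve_left hij)).symm
  by_cases hi : 1 ≤ i ∧ i ≤ n - 1
  · by_cases hj : 1 ≤ j ∧ j ≤ n - 1
    · exact σ_comm hi.1 hij hj.2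
    · rw [σ_eq_one hj]; exact Commute.one_right _
  · rw [σ_eq_one hi]; exact Commute.one_left _

lemma down_eq_one {a b : ℕ} (h : a < b) : down n a b = 1 := by
  simp [down, show a + 1 - b = 0 by omega]

lemma down_eq_σ_mul {a b : ℕ} (hb : 1 ≤ b) (h : b ≤ a) : down n a b = σ n a * down n (a - 1) b := by
  rw [down, down, show a + 1 - b = a - b + 1 by omega, show a - 1 + 1 - b = a - b by omega,
    List.range'_concat]
  simp [show b + (a - b) = a by omega]

lemma down_eq_mul_σ {a b : ℕ} (h : b ≤ a) : down n a b = down n a (b + 1) * σ n b := by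
  rw [down, down, show a + 1 - b = a - b + 1 by omega, show a + 1 - (b + 1) = a - b by omega,
    List.range'_succ]
  simp

lemma up_eq_σ_mul {a b : ℕ} (h : a ≤ b) : up n a b = σ n a * up n (a + 1) b := by
  rw [up, up, show b + 1 - a = b - a + 1 by omega, show b + 1 - (a + 1) = b - a by omega,
    List.range'_succ]
  simp

lemma up_eq_mul_σ {a b : ℕ} (hb : 1 ≤ b) (h : a ≤ b) : up n a b = up n a (b - 1) * σ n b := by
  rw [up, up, show b + 1 - a = b - a + 1 by omega, show b - 1 + 1 - a = b - a by omega,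
    List.range'_concat]
  simp [show a + (b - a) = b by omega]

lemma commute_down {x : BraidGroup n} {a b : ℕ}
    (h : ∀ k, b ≤ k → k ≤ a → Commute x (σ n k)) : Commute x (down n a b) :=
  Commute.list_prod_right _ _ fun y hy => by
    simp only [List.mem_map, List.mem_reverse, List.mem_range'_1] at hy
    obtain ⟨k, hk, rfl⟩ := hy
    exact h k hk.1 (by omega)

lemma commute_up {x : BraidGroup n} {a b : ℕ}
    (h : ∀ k, a ≤ k → k ≤ b → Commute x (σ n k)) : Commute x (up n a b) :=
  Commute.list_prod_right _ _ fun y hy => by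
    simp only [List.mem_map, List.mem_range'_1] at hy
    obtain ⟨k, hk, rfl⟩ := hy
    exact h k hk.1 (by omega)

lemma semiconjBy_down {x : BraidGroup n} {a b : ℕ}
    (h : ∀ k, b ≤ k → k ≤ a → SemiconjBy x (σ n k) (σ n (k + 1))) :
    SemiconjBy x (down n a b) (down n (a + 1) (b + 1)) := by
  have hshift : down n (a + 1) (b + 1)
      = ((List.range' b (a + 1 - b)).reverse.map fun k => σ n (k + 1)).prod := by
    rw [down, show a + 1 + 1 - (b + 1) = a + 1 - b by omega, List.range'_succ_left,
      ← List.map_reverse, List.map_map]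
    rfl
  rw [hshift]
  exact SemiconjBy.list_prod_map fun k hk => by
    simp only [List.mem_reverse, List.mem_range'_1] at hk
    exact h k hk.1 (by omega)

lemma semiconjBy_up {x : BraidGroup n} {a b : ℕ}
    (h : ∀ k, a ≤ k → k ≤ b → SemiconjBy x (σ n k) (σ n (k + 1))) :
    SemiconjBy x (up n a b) (up n (a + 1) (b + 1)) := by
  have hshift : up n (a + 1) (b + 1)
      = ((List.range' a (b + 1 - a)).map fun k => σ n (k + 1)).prod := by
    rw [up, show b + 1 + 1 - (a + 1) = b + 1 - a by omega, List.range'_succ_left, List.map_map]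
    rfl
  rw [hshift]
  exact SemiconjBy.list_prod_map fun k hk => by
    simp only [List.mem_range'_1] at hk
    exact h k hk.1 (by omega)

lemma σ_mul_down {j a b : ℕ} (hb : 1 ≤ b) (hbj : b ≤ j) (hja : j + 1 ≤ a) (ha : a ≤ n - 1) :
    σ n j * down n a b = down n a b * σ n (j + 1) := by
  induction a, hja using Nat.le_induction with
  | base =>
    have hc : Commute (σ n (j + 1)) (down n (j - 1) b) :=
      commute_down fun k _ _ => σ_commute (Or.inr (by omega))
    rw [down_eq_σ_mul hb (by omega), Nat.add_sub_cancel, down_eq_σ_mul hb hbj]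
    calc σ n j * (σ n (j + 1) * (σ n j * down n (j - 1) b))
        = σ n j * σ n (j + 1) * σ n j * down n (j - 1) b := by simp only [mul_assoc]
      _ = σ n (j + 1) * σ n j * (σ n (j + 1) * down n (j - 1) b) := by
        rw [σ_braid (by omega) ha, mul_assoc]
      _ = σ n (j + 1) * (σ n j * down n (j - 1) b) * σ n (j + 1) := by
        rw [hc.eq]; simp only [mul_assoc]
  | succ a hja ih =>
    have hc : Commute (σ n j) (σ n (a + 1)) := σ_commute (Or.inl (by omega))
    rw [down_eq_σ_mul hb (by omega), Nat.add_sub_cancel, ← mul_assoc, hc.eq, mul_assoc,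
      ih (by omega), mul_assoc]

lemma up_mul_σ {j a b : ℕ} (hb : 1 ≤ b) (hbj : b ≤ j) (hja : j + 1 ≤ a) (ha : a ≤ n - 1) :
    up n b a * σ n j = σ n (j + 1) * up n b a := by
  induction a, hja using Nat.le_induction with
  | base =>
    have hc : Commute (σ n (j + 1)) (up n b (j - 1)) :=
      commute_up fun k _ _ => σ_commute (Or.inr (by omega))
    rw [up_eq_mul_σ (by omega) (by omega), Nat.add_sub_cancel, up_eq_mul_σ (by omega) hbj]
    calc up n b (j - 1) * σ n j * σ n (j + 1) * σ n j
        = up n b (j - 1) * (σ n j * σ n (j + 1) * σ n j) := by simp only [mul_assoc]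
      _ = up n b (j - 1) * σ n (j + 1) * (σ n j * σ n (j + 1)) := by
        rw [σ_braid (by omega) ha]; simp only [mul_assoc]
      _ = σ n (j + 1) * (up n b (j - 1) * σ n j * σ n (j + 1)) := by
        rw [← hc.eq]; simp only [mul_assoc]
  | succ a hja ih =>
    have hc : Commute (σ n j) (σ n (a + 1)) := σ_commute (Or.inl (by omega))
    rw [up_eq_mul_σ (by omega) (by omega), Nat.add_sub_cancel, mul_assoc, ← hc.eq, ← mul_assoc,
      ih (by omega), mul_assoc]

lemma σ_one_mul_up_sq (hn : 2 ≤ n) :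
    σ n 1 * (up n 1 (n - 1) * up n 1 (n - 1))
      = up n 1 (n - 1) * up n 1 (n - 1) * σ n (n - 1) := by
  have hshift : up n 1 (n - 1) * up n 1 (n - 1 - 1) = up n 2 (n - 1) * up n 1 (n - 1) := by
    have h := semiconjBy_up (x := up n 1 (n - 1)) (a := 1) (b := n - 1 - 1)
      fun k hk1 hk2 => up_mul_σ le_rfl hk1 (by omega) le_rfl
    rwa [show n - 1 - 1 + 1 = n - 1 by omega] at h
  calc σ n 1 * (up n 1 (n - 1) * up n 1 (n - 1))
      = σ n 1 * (up n 1 (n - 1) * (up n 1 (n - 1 - 1) * σ n (n - 1))) := by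
        rw [← up_eq_mul_σ (by omega) (by omega)]
    _ = σ n 1 * up n 2 (n - 1) * up n 1 (n - 1) * σ n (n - 1) := by
        rw [← mul_assoc (up n 1 (n - 1)), hshift]; simp only [mul_assoc]
    _ = up n 1 (n - 1) * up n 1 (n - 1) * σ n (n - 1) := by
        rw [← up_eq_σ_mul (by omega)]

lemma σ_mul_down_sq (hn : 2 ≤ n) :
    σ n (n - 1) * (down n (n - 1) 1 * down n (n - 1) 1)
      = down n (n - 1) 1 * down n (n - 1) 1 * σ n 1 := by
  have hshift : down n (n - 1 - 1) 1 * down n (n - 1) 1 = down n (n - 1) 1 * down n (n - 1) 2 := by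
    have h := semiconjBy_down (x := (down n (n - 1) 1)⁻¹) (a := n - 1 - 1) (b := 1)
      fun k hk1 hk2 =>
        SemiconjBy.inv_symm_left (σ_mul_down (n := n) le_rfl hk1 (by omega) le_rfl).symm
    rw [show n - 1 - 1 + 1 = n - 1 by omega] at h
    exact (SemiconjBy.inv_symm_left_iff.mp h).symm
  calc σ n (n - 1) * (down n (n - 1) 1 * down n (n - 1) 1)
      = σ n (n - 1) * (down n (n - 1) 1 * (down n (n - 1) 2 * σ n 1)) := by
        rw [← down_eq_mul_σ (by omega)]
    _ = σ n (n - 1) * down n (n - 1 - 1) 1 * down n (n - 1) 1 * σ n 1 := by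
        rw [← mul_assoc (down n (n - 1) 1), ← hshift]; simp only [mul_assoc]
    _ = down n (n - 1) 1 * down n (n - 1) 1 * σ n 1 := by
        rw [← down_eq_σ_mul le_rfl (by omega)]

lemma commute_down_pow {j : ℕ} (hj1 : 1 ≤ j) (hj2 : j ≤ n - 1) :
    Commute (down n (n - 1) 1 ^ n) (σ n j) :=
  commute_pow_of_cyclic_shift (fun k hk1 hk2 => (σ_mul_down le_rfl hk1 (by omega) le_rfl).symm)
    (by rw [sq]; exact (σ_mul_down_sq (by omega)).symm) hj1 hj2

lemma commute_up_pow {j : ℕ} (hj1 : 1 ≤ j) (hj2 : j ≤ n - 1) :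
    Commute (up n 1 (n - 1) ^ n) (σ n j) := by
  have h := commute_pow_of_cyclic_shift (s := σ n) (x := (up n 1 (n - 1))⁻¹)
    (fun k hk1 hk2 => SemiconjBy.inv_symm_left (up_mul_σ (n := n) le_rfl hk1 (by omega) le_rfl))
    (by rw [inv_pow, sq]; exact SemiconjBy.inv_symm_left (σ_one_mul_up_sq (n := n) (by omega)).symm)
    hj1 hj2
  rwa [inv_pow, Commute.inv_left_iff] at h

lemma flipsDown_eq_one {a b : ℕ} (h : a < b) : flipsDown n a b = 1 := by
  simp [flipsDown, show a + 1 - b = 0 by omega]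

lemma flipsDown_eq_flip_mul {a b : ℕ} (hb : 1 ≤ b) (h : b ≤ a) :
    flipsDown n a b = flip n a * flipsDown n (a - 1) b := by
  rw [flipsDown, flipsDown, show a + 1 - b = a - b + 1 by omega,
    show a - 1 + 1 - b = a - b by omega, List.range'_concat]
  simp [show b + (a - b) = a by omega]

lemma flipsDown_eq_mul {a b c : ℕ} (hbc : b ≤ c + 1) (hca : c ≤ a) :
    flipsDown n a b = flipsDown n a (c + 1) * flipsDown n c b := by
  rw [flipsDown, flipsDown, flipsDown, show a + 1 - b = (c + 1 - b) + (a + 1 - (c + 1)) by omega,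
    ← List.range'_append_1, show b + (c + 1 - b) = c + 1 by omega]
  simp

lemma commute_flipsDown {x : BraidGroup n} {a b : ℕ}
    (h : ∀ i, b ≤ i → i ≤ a → Commute x (flip n i)) : Commute x (flipsDown n a b) :=
  Commute.list_prod_right _ _ fun y hy => by
    simp only [List.mem_map, List.mem_reverse, List.mem_range'_1] at hy
    obtain ⟨i, hi, rfl⟩ := hy
    exact h i hi.1 (by omega)

lemma flip_one : flip n 1 = up n 1 (n - 1) * down n (n - 1) 1 := by
  rw [flip, down_eq_one (a := 1 - 1) (by omega), one_mul]

lemma flip_mul_up {k : ℕ} (hk2 : 2 ≤ k) (hkn : k ≤ n) :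
    flip n k * up n 1 (n - 1) = up n 1 (n - 1) * flip n (k - 1) := by
  have hD : down n (k - 1) 1 = down n (k - 1) 2 * σ n 1 := down_eq_mul_σ (by omega)
  have hUD : up n 1 (n - 1) * down n (k - 1 - 1) 1 = down n (k - 1) 2 * up n 1 (n - 1) := by
    have h := semiconjBy_down (x := up n 1 (n - 1)) (a := k - 1 - 1) (b := 1)
      fun m hm1 hm2 => up_mul_σ le_rfl hm1 (by omega) le_rfl
    rwa [show k - 1 - 1 + 1 = k - 1 by omega] at h
  have hEU : down n (n - 1) k * up n 1 (n - 1) = up n 1 (n - 1) * down n (n - 1 - 1) (k - 1) := by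
    have h := semiconjBy_down (x := up n 1 (n - 1)) (a := n - 1 - 1) (b := k - 1)
      fun m hm1 hm2 => up_mul_σ le_rfl (by omega) (by omega) le_rfl
    rw [show n - 1 - 1 + 1 = n - 1 by omega, show k - 1 + 1 = k by omega] at h
    exact h.symm
  have hE : down n (n - 1) (k - 1) = σ n (n - 1) * down n (n - 1 - 1) (k - 1) :=
    down_eq_σ_mul (by omega) (by omega)
  rw [flip, flip]
  calc down n (k - 1) 1 * up n 1 (n - 1) * down n (n - 1) k * up n 1 (n - 1)
      = down n (k - 1) 2 * (σ n 1 * (up n 1 (n - 1) * up n 1 (n - 1)))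
          * down n (n - 1 - 1) (k - 1) := by
        rw [hD, mul_assoc _ (down n (n - 1) k), hEU]; simp only [mul_assoc]
    _ = down n (k - 1) 2 * up n 1 (n - 1) * (up n 1 (n - 1) * down n (n - 1) (k - 1)) := by
        rw [σ_one_mul_up_sq (by omega), hE]; simp only [mul_assoc]
    _ = up n 1 (n - 1) * (down n (k - 1 - 1) 1 * up n 1 (n - 1) * down n (n - 1) (k - 1)) := by
        rw [← hUD]; simp only [mul_assoc]

lemma flip_succ_mul_up_pow {k : ℕ} (hk : k + 1 ≤ n) :
    flip n (k + 1) * up n 1 (n - 1) ^ k = up n 1 (n - 1) ^ k * flip n 1 := by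
  induction k with
  | zero => simp
  | succ k ih =>
    rw [pow_succ', ← mul_assoc, flip_mul_up (by omega) hk, Nat.add_sub_cancel, mul_assoc,
      ih (by omega), ← mul_assoc, ← pow_succ']

lemma flipsDown_one_eq_pow {k : ℕ} (hk : k ≤ n) :
    flipsDown n k 1 = up n 1 (n - 1) ^ k * down n (n - 1) 1 ^ k := by
  induction k with
  | zero => simp [flipsDown_eq_one]
  | succ k ih =>
    rw [flipsDown_eq_flip_mul le_rfl (by omega), Nat.add_sub_cancel, ih (by omega),
      ← mul_assoc, flip_succ_mul_up_pow hk, flip_one, pow_succ, pow_succ']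
    simp only [mul_assoc]

lemma σ_mul_flip {j : ℕ} (hj1 : 1 ≤ j) (hj2 : j ≤ n - 1) :
    σ n j * flip n j = flip n (j + 1) * σ n j := by
  rw [flip, flip, Nat.add_sub_cancel, down_eq_mul_σ hj2, down_eq_σ_mul le_rfl hj1]
  simp only [mul_assoc]

lemma commute_σ_flip_of_lt {i j : ℕ} (hi : 1 ≤ i) (hij : i < j) (hj : j ≤ n - 1) :
    Commute (σ n j) (flip n i) := by
  have hD : Commute (σ n j) (down n (i - 1) 1) :=
    commute_down fun k _ _ => σ_commute (Or.inr (by omega))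
  have hU : σ n j * up n 1 (n - 1) = up n 1 (n - 1) * σ n (j - 1) := by
    have h := up_mul_σ (n := n) le_rfl (show 1 ≤ j - 1 by omega) (by omega) le_rfl
    rw [show j - 1 + 1 = j by omega] at h
    exact h.symm
  have hE : σ n (j - 1) * down n (n - 1) i = down n (n - 1) i * σ n j := by
    have h := σ_mul_down (n := n) hi (show i ≤ j - 1 by omega) (by omega) le_rfl
    rwa [show j - 1 + 1 = j by omega] at h
  show σ n j * (down n (i - 1) 1 * up n 1 (n - 1) * down n (n - 1) i)
    = down n (i - 1) 1 * up n 1 (n - 1) * down n (n - 1) i * σ n j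
  rw [← mul_assoc, ← mul_assoc, hD.eq, mul_assoc _ (σ n j), hU, mul_assoc, mul_assoc, hE]
  simp only [mul_assoc]

lemma commute_σ_flip_of_add_two_le {i j : ℕ} (hj : 1 ≤ j) (hij : j + 2 ≤ i) (hin : i ≤ n) :
    Commute (σ n j) (flip n i) := by
  have hD : σ n j * down n (i - 1) 1 = down n (i - 1) 1 * σ n (j + 1) :=
    σ_mul_down le_rfl hj (by omega) (by omega)
  have hU : σ n (j + 1) * up n 1 (n - 1) = up n 1 (n - 1) * σ n j :=
    (up_mul_σ le_rfl hj (by omega) le_rfl).symm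
  have hE : Commute (σ n j) (down n (n - 1) i) :=
    commute_down fun k _ _ => σ_commute (Or.inl (by omega))
  show σ n j * (down n (i - 1) 1 * up n 1 (n - 1) * down n (n - 1) i)
    = down n (i - 1) 1 * up n 1 (n - 1) * down n (n - 1) i * σ n j
  rw [← mul_assoc, ← mul_assoc, hD, mul_assoc _ (σ n (j + 1)), hU, mul_assoc, mul_assoc, hE.eq]
  simp only [mul_assoc]

/-- `σ_j` commutes with the central product `r_n ⋯ r_1 = U ^ n * D ^ n` and with all of its
factors except `r_{j+1} r_j`. -/
lemma commute_σ_flip_succ_mul_flip {j : ℕ} (hj1 : 1 ≤ j) (hj2 : j ≤ n - 1) :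
    Commute (σ n j) (flip n (j + 1) * flip n j) := by
  have hsplit : flipsDown n n 1
      = flipsDown n n (j + 1 + 1) * (flip n (j + 1) * flip n j) * flipsDown n (j - 1) 1 := by
    rw [flipsDown_eq_mul (c := j + 1) (by omega) (by omega),
      flipsDown_eq_flip_mul le_rfl (by omega), Nat.add_sub_cancel,
      flipsDown_eq_flip_mul le_rfl hj1]
    simp only [mul_assoc]
  have hall : Commute (σ n j) (flipsDown n n 1) := by
    rw [flipsDown_one_eq_pow le_rfl]
    exact ((commute_up_pow hj1 hj2).mul_left (commute_down_pow hj1 hj2)).symm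
  have hleft : Commute (σ n j) (flipsDown n n (j + 1 + 1)) :=
    commute_flipsDown fun i hi1 hi2 => commute_σ_flip_of_add_two_le hj1 hi1 hi2
  have hright : Commute (σ n j) (flipsDown n (j - 1) 1) :=
    commute_flipsDown fun i hi1 hi2 => commute_σ_flip_of_lt hi1 (by omega) hj2
  rw [hsplit] at hall
  simpa [mul_assoc] using (hleft.inv_right.mul_right hall).mul_right hright.inv_right

lemma flip_mem_R' {i : ℕ} (h1 : 1 ≤ i) (h2 : i ≤ n) : flip n i ∈ R' n :=
  Subgroup.subset_closure ⟨i, ⟨h1, h2⟩, rfl⟩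

lemma σ_conj_flip_mem_R' {i j : ℕ} (hj1 : 1 ≤ j) (hj2 : j ≤ n - 1) (hi1 : 1 ≤ i) (hi2 : i ≤ n) :
    σ n j * flip n i * (σ n j)⁻¹ ∈ R' n ∧ (σ n j)⁻¹ * flip n i * σ n j ∈ R' n := by
  have hmove := σ_mul_flip hj1 hj2
  have hflip : flip n (j + 1) = σ n j * flip n j * (σ n j)⁻¹ := by
    rw [hmove, mul_inv_cancel_right]
  have hpair := commute_σ_flip_succ_mul_flip hj1 hj2
  rcases lt_trichotomy i j with hij | rfl | hji
  · have hc := commute_σ_flip_of_lt hi1 hij hj2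
    rw [hc.mul_inv_cancel, hc.inv_mul_cancel]
    exact ⟨flip_mem_R' hi1 hi2, flip_mem_R' hi1 hi2⟩
  · have hconj : (σ n i)⁻¹ * flip n i * σ n i
        = (flip n i)⁻¹ * ((σ n i)⁻¹ * (flip n (i + 1) * flip n i) * σ n i) := by
      rw [hflip]; group
    rw [← hflip, hconj, hpair.inv_mul_cancel]
    exact ⟨flip_mem_R' (by omega) (by omega), mul_mem (inv_mem (flip_mem_R' hi1 hi2))
      (mul_mem (flip_mem_R' (by omega) (by omega)) (flip_mem_R' hi1 hi2))⟩
  obtain rfl | hji := (Nat.succ_le_of_lt hji).eq_or_lt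
  · have hconj : σ n j * flip n (j + 1) * (σ n j)⁻¹
        = σ n j * (flip n (j + 1) * flip n j) * (σ n j)⁻¹ * (flip n (j + 1))⁻¹ := by
      rw [hflip]; group
    have hconj' : (σ n j)⁻¹ * flip n (j + 1) * σ n j = flip n j := by
      rw [hflip]; group
    rw [hconj, hpair.mul_inv_cancel, hconj']
    exact ⟨mul_mem (mul_mem (flip_mem_R' hi1 hi2) (flip_mem_R' hj1 (by omega)))
      (inv_mem (flip_mem_R' hi1 hi2)), flip_mem_R' hj1 (by omega)⟩
  · have hc := commute_σ_flip_of_add_two_le hj1 hji hi2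
    rw [hc.mul_inv_cancel, hc.inv_mul_cancel]
    exact ⟨flip_mem_R' hi1 hi2, flip_mem_R' hi1 hi2⟩

end BraidRelations

lemma closure_range_σ_eq_top (n : ℕ) :
    Subgroup.closure (Set.range fun i : Fin (n - 1) => σ n (i.val + 1)) = ⊤ := by
  have hσ : (fun i : Fin (n - 1) => σ n (i.val + 1)) = PresentedGroup.of := by
    funext i
    exact (dif_pos (show 1 ≤ i.val + 1 ∧ i.val + 1 ≤ n - 1 by omega) :)
  rw [hσ]
  exact PresentedGroup.closure_range_of _

theorem R'_normal_general (n : ℕ) :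
    (R' n).Normal ∧ Subgroup.normalClosure (flip n '' Set.Icc 1 n) = R' n := by
  have hσ : ∀ i : Fin (n - 1),
      σ n (i.val + 1) ∈ Subgroup.normalizer (R' n : Set (BraidGroup n)) := by
    intro i
    apply Subgroup.mem_normalizer_closure_of_conj <;> rintro _ ⟨k, ⟨hk1, hk2⟩, rfl⟩
    · exact (σ_conj_flip_mem_R' (by omega) (by omega) hk1 hk2).1
    · exact (σ_conj_flip_mem_R' (by omega) (by omega) hk1 hk2).2
  have hnormal : (R' n).Normal := by
    rw [← Subgroup.normalizer_eq_top_iff, eq_top_iff, ← closure_range_σ_eq_top,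
      Subgroup.closure_le]
    rintro _ ⟨i, rfl⟩
    exact hσ i
  refine ⟨hnormal, ?_⟩
  rw [← Subgroup.normalClosure_closure_eq_normalClosure]
  exact Subgroup.normalClosure_eq_self (R' n)

/-- The subgroup `R_n'` of `B_n` generated by the flips `r_1, …, r_n` is normal in `B_n`;
equivalently, the normal closure of `{r_1, …, r_n}` equals the subgroup they generate. -/
theorem R'_normal (n : ℕ) (hn : 2 ≤ n) :
    (R' n).Normal ∧ Subgroup.normalClosure (flip n '' Set.Icc 1 n) = R' n :=
  R'_normal_general n

end Braid
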